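/- Let ρ(x, y, v₁, …, v_ℓ) be an L₂-formula with ℓ + 2 free variables that represents a strict partial order, i.e., for every dimension n ≥ 1 and every assignment of partial instances of dimension n to v₁, …, v_ℓ, the binary relation {(e, e') | B_n ⊨ ρ(e, e', v₁, …, v_ℓ)} on partial instances of dimension n is irreflexive and transitive. Then for every n ≥ 1, every sequence (e₁, …, e_k) of partial instances of dimension n that is a path in ρ — meaning there exist partial instances e'₁, …, e'_ℓ of dimension n with B_n ⊨ ρ(e_i, e_{i+1}, e'₁, …, e'_ℓ) for every i ∈ {1, …, k−1} — satisfies k ≤ (n+1)^{3^{ℓ+1}}. -/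

import Mathlib

open FirstOrder FirstOrder.Language

abbrev PI (n : ℕ) : Type := Fin n → Option Bool

def Subs {n : ℕ} (e e' : PI n) : Prop := ∀ i, e i ≠ none → e' i = e i

noncomputable def undefCard {n : ℕ} (e : PI n) : ℕ := Set.ncard {i | e i = none}

/-- `e ⪯ e'` iff `|e_⊥| ≥ |e'_⊥|`. -/
def Lel {n : ℕ} (e e' : PI n) : Prop := undefCard e' ≤ undefCard e

/-- The language `L₂` with two binary relation symbols (indexed by `Bool`). -/
def l2Lang : Language where
  Functions _ := Empty
  Relations n := match n with
    | 2 => Bool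
    | _ => Empty

/-- The structure `B_n`: partial instances of dimension `n`, with the first binary symbol
interpreted as subsumption `⊑` and the second as `⪯`. -/
instance l2Struct (n : ℕ) : l2Lang.Structure (PI n) where
  funMap := fun {_} f => f.elim
  RelMap := fun {k} r v => match k, r with
    | 2, false => Subs (v 0) (v 1)
    | 2, true => Lel (v 0) (v 1)

/-- The binary relation on partial instances of dimension `n` defined by the formula
`ρ(x, y, v₁, …, v_ℓ)` with the parameters `v₁, …, v_ℓ` instantiated to `vs`. -/
def RhoRel {ℓ n : ℕ} (ρ : l2Lang.Formula (Fin (ℓ + 2))) (vs : Fin ℓ → PI n)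
    (e e' : PI n) : Prop :=
  ρ.Realize (Fin.cons e (Fin.cons e' vs))

/-!
Relative to the parameters `vs`, describe a partial instance `e` by its *column
type*: how many coordinates `c` carry each of the `3 ^ (ℓ + 1)` possible columns
`(e c, vs₁ c, …, vs_ℓ c)`. There are at most `(n + 1) ^ (3 ^ (ℓ + 1))` column types. If two
members `eᵢ, eⱼ` (`i < j`) of a path had the same type, a permutation `π` of the coordinates
would fix every `vsₜ` and send `eⱼ` to `eᵢ = eⱼ ∘ π`. Permuting coordinates is an automorphism of
`B_n`, so `ρ(eⱼ ∘ π, eⱼ)` propagates along the orbit of `eⱼ`; by transitivity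
`ρ(eⱼ ∘ π ^ m, eⱼ)` for `m` the order of `π`, contradicting irreflexivity.
-/

section StrictOrder

variable {α : Type*} {r : α → α → Prop}

theorem rel_of_lt_of_forall_rel_succ (htrans : ∀ {a b c}, r a b → r b c → r a c)
    {k : ℕ} {es : Fin k → α}
    (hsucc : ∀ (i : ℕ) (h : i + 1 < k), r (es ⟨i, Nat.lt_of_succ_lt h⟩) (es ⟨i + 1, h⟩))
    {i j : Fin k} (hij : i < j) : r (es i) (es j) := by
  obtain ⟨i, hi⟩ := i
  obtain ⟨j, hj⟩ := j
  induction j with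
  | zero => exact absurd hij (Nat.not_lt_zero i)
  | succ j ih =>
    rcases (Nat.lt_succ_iff.mp hij).eq_or_lt with rfl | hlt
    · exact hsucc i hj
    · exact htrans (ih (by omega) hlt) (hsucc j hj)

theorem Equiv.Perm.not_rel_apply_self [Finite α] (hirr : ∀ a, ¬ r a a)
    (htrans : ∀ {a b c}, r a b → r b c → r a c)
    (σ : Equiv.Perm α) (hσ : ∀ a b, r (σ a) (σ b) ↔ r a b) (a : α) : ¬ r (σ a) a := by
  intro h
  have hpow : ∀ (s : ℕ) (a b : α), r ((σ ^ s) a) ((σ ^ s) b) ↔ r a b := by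
    intro s
    induction s with
    | zero => simp
    | succ s ih => intro a b; rw [pow_succ', Equiv.Perm.mul_apply, Equiv.Perm.mul_apply, hσ, ih]
  have horbit : ∀ s : ℕ, r ((σ ^ (s + 1)) a) a := by
    intro s
    induction s with
    | zero => simpa using h
    | succ s ih =>
      refine htrans ?_ ih
      rw [pow_succ σ (s + 1), Equiv.Perm.mul_apply]
      exact (hpow (s + 1) _ _).mpr h
  have hord := Nat.sub_add_cancel (orderOf_pos σ)
  have := horbit (orderOf σ - 1)
  rw [hord, pow_orderOf_eq_one] at this
  exact hirr a this

end StrictOrder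

section FiberCard

variable {ι β : Type*} [Fintype ι] [DecidableEq β]

def fiberCard (f : ι → β) (b : β) : Fin (Fintype.card ι + 1) :=
  ⟨Finset.card {i | f i = b}, Nat.lt_succ_of_le (Finset.card_filter_le _ _)⟩

theorem exists_perm_comp_eq_of_fiberCard_eq {f g : ι → β} (h : fiberCard f = fiberCard g) :
    ∃ π : Equiv.Perm ι, g ∘ π = f := by
  have hcard : ∀ b, Fintype.card {i // f i = b} = Fintype.card {i // g i = b} := by
    intro b
    simpa only [Fintype.card_subtype, fiberCard, Fin.mk.injEq] using congrFun h b
  exact ⟨Equiv.ofFiberEquiv fun b => Fintype.equivOfCardEq (hcard b),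
    funext (Equiv.ofFiberEquiv_map _)⟩

end FiberCard

section Automorphisms

variable {n : ℕ}

theorem undefCard_comp (e : PI n) (π : Equiv.Perm (Fin n)) : undefCard (e ∘ π) = undefCard e := by
  have : {i | (e ∘ π) i = none} = π.symm '' {i | e i = none} := by
    rw [Equiv.image_eq_preimage_symm]; rfl
  rw [undefCard, undefCard, this, Set.ncard_image_of_injective _ π.symm.injective]

theorem subs_comp_iff (e e' : PI n) (π : Equiv.Perm (Fin n)) :
    Subs (e ∘ π) (e' ∘ π) ↔ Subs e e' :=
  ⟨fun h i hi => by simpa using h (π.symm i) (by simpa using hi), fun h i hi => h (π i) hi⟩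

def precompEquiv (π : Equiv.Perm (Fin n)) : PI n ≃[l2Lang] PI n where
  toEquiv := π.symm.arrowCongr (Equiv.refl _)
  map_fun' := fun f => f.elim
  map_rel' := fun {m} r x => match m, r with
    | 2, false => subs_comp_iff (x 0) (x 1) π
    | 2, true => by
      show undefCard (x 1 ∘ π) ≤ undefCard (x 0 ∘ π) ↔ undefCard (x 1) ≤ undefCard (x 0)
      rw [undefCard_comp, undefCard_comp]

@[simp] theorem precompEquiv_apply (π : Equiv.Perm (Fin n)) (e : PI n) :
    precompEquiv π e = e ∘ π := rfl

theorem rhoRel_comp_iff {ℓ : ℕ} (ρ : l2Lang.Formula (Fin (ℓ + 2))) {vs : Fin ℓ → PI n}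
    {π : Equiv.Perm (Fin n)} (hvs : ∀ t, vs t ∘ π = vs t) (e e' : PI n) :
    RhoRel ρ vs (e ∘ π) (e' ∘ π) ↔ RhoRel ρ vs e e' := by
  have hcons : precompEquiv π ∘ Fin.cons e (Fin.cons e' vs) =
      Fin.cons (e ∘ π) (Fin.cons (e' ∘ π) vs) := by
    funext x
    refine Fin.cases ?_ (fun y => Fin.cases ?_ (fun z => ?_) y) x <;> simp [hvs]
  unfold RhoRel
  rw [← hcons]
  exact StrongHomClass.realize_formula (precompEquiv π) ρ

end Automorphisms

section Columns

variable {ℓ n : ℕ}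

def columns (vs : Fin ℓ → PI n) (e : PI n) : Fin n → Option Bool × (Fin ℓ → Option Bool) :=
  fun c => (e c, fun t => vs t c)

theorem fiberCard_columns_ne_of_rhoRel (ρ : l2Lang.Formula (Fin (ℓ + 2))) (vs : Fin ℓ → PI n)
    (hirr : ∀ e : PI n, ¬ RhoRel ρ vs e e)
    (htrans : ∀ e₁ e₂ e₃ : PI n, RhoRel ρ vs e₁ e₂ → RhoRel ρ vs e₂ e₃ → RhoRel ρ vs e₁ e₃)
    {e e' : PI n} (hrel : RhoRel ρ vs e e') :
    fiberCard (columns vs e) ≠ fiberCard (columns vs e') := by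
  intro h
  obtain ⟨π, hπ⟩ := exists_perm_comp_eq_of_fiberCard_eq h
  have he : e' ∘ π = e := funext fun c => congrArg Prod.fst (congrFun hπ c)
  have hvs : ∀ t, vs t ∘ π = vs t := fun t =>
    funext fun c => congrFun (congrArg Prod.snd (congrFun hπ c)) t
  refine Equiv.Perm.not_rel_apply_self hirr (htrans _ _ _) (precompEquiv π).toEquiv
    (rhoRel_comp_iff ρ hvs) e' ?_
  rwa [← he] at hrel

end Columns

theorem stmt8 (ℓ : ℕ) (ρ : l2Lang.Formula (Fin (ℓ + 2)))
    (hpo : ∀ n : ℕ, 1 ≤ n → ∀ vs : Fin ℓ → PI n,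
      (∀ e : PI n, ¬ RhoRel ρ vs e e) ∧
      (∀ e₁ e₂ e₃ : PI n, RhoRel ρ vs e₁ e₂ → RhoRel ρ vs e₂ e₃ → RhoRel ρ vs e₁ e₃)) :
    ∀ n : ℕ, 1 ≤ n → ∀ (k : ℕ) (es : Fin k → PI n),
      (∃ vs : Fin ℓ → PI n, ∀ (i : ℕ) (h : i + 1 < k),
        RhoRel ρ vs (es ⟨i, Nat.lt_of_succ_lt h⟩) (es ⟨i + 1, h⟩)) →
      k ≤ (n + 1) ^ (3 ^ (ℓ + 1)) := by
  intro n hn k es ⟨vs, hpath⟩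
  obtain ⟨hirr, htrans⟩ := hpo n hn vs
  have hinj : Function.Injective fun i => fiberCard (columns vs (es i)) :=
    Function.Injective.of_lt_imp_ne fun i j hij =>
      fiberCard_columns_ne_of_rhoRel ρ vs hirr htrans
        (rel_of_lt_of_forall_rel_succ (r := RhoRel ρ vs) (htrans _ _ _) hpath hij)
  simpa [Fintype.card_prod, pow_succ'] using Fintype.card_le_of_injective _ hinj
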